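/- Let ℓ(θ,x,y) = (1/2)(θᵀxy - 1)² with θ, x ∈ ℝ^p, y ∈ {-1,1}. Let x̃ = x + w with w ~ N(0, σ²I_p), and ỹ the randomized response of y with keep-probability S(ε). Define the debiased estimator ℓ̃(θ, x̃, ỹ) = S̃(ε)·ℓ(θ,x̃,ỹ) + (1-S̃(ε))·ℓ(θ,x̃,-ỹ) - (σ²/2)‖θ‖², where S̃(ε) = 1/(1-e^{-ε}). Then E_{x̃,ỹ}[ℓ̃(θ, x̃, ỹ)] = ℓ(θ,x,y). -/

import Mathlib

open MeasureTheory ProbabilityTheory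

noncomputable def S (ε : ℝ) : ℝ := 1 / (1 + Real.exp (-ε))
noncomputable def Stilde (ε : ℝ) : ℝ := 1 / (1 - Real.exp (-ε))

/-- The isotropic Gaussian measure `N(0, v·I_p)` on `ℝ^p`. -/
noncomputable def gaussPi (p : ℕ) (v : ℝ) : Measure (EuclideanSpace ℝ (Fin p)) :=
  Measure.map (MeasurableEquiv.toLp 2 (Fin p → ℝ))
    (Measure.pi fun _ : Fin p => gaussianReal 0 v.toNNReal)

/-- The quadratic loss `ℓ(θ,x,y) = (1/2)(θᵀxy - 1)²`. -/
noncomputable def quadLoss (p : ℕ) (θ x : EuclideanSpace ℝ (Fin p)) (y : ℝ) : ℝ :=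
  (1 / 2) * ((inner ℝ θ x : ℝ) * y - 1) ^ 2

/-- The debiased IWP estimator of the quadratic loss:
`ℓ̃(θ, x̃, ỹ) = S̃(ε) ℓ(θ,x̃,ỹ) + (1-S̃(ε)) ℓ(θ,x̃,-ỹ) - (σ²/2)‖θ‖²`. -/
noncomputable def iwpQuad (p : ℕ) (σ ε : ℝ) (θ xt : EuclideanSpace ℝ (Fin p))
    (yt : ℝ) : ℝ :=
  Stilde ε * quadLoss p θ xt yt + (1 - Stilde ε) * quadLoss p θ xt (-yt)
    - σ ^ 2 / 2 * ‖θ‖ ^ 2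

/-! Write the noise as `w = √(σ²) • z` with `z` standard Gaussian. For a fixed `θ`, the linear form
`⟪θ, z⟫` has mean `0` and second moment `‖θ‖²`, so for `y = ±1` the noise raises the expected loss
by exactly `σ²‖θ‖²/2`, which the penalty term of `ℓ̃` removes. What remains is the average, under
randomized response, of the combination `S̃ ℓ(ỹ) + (1 - S̃) ℓ(-ỹ)`, which equals `ℓ(y)`. -/

open scoped RealInnerProductSpace

lemma gaussPi_eq_map_smul_stdGaussian (p : ℕ) {v : ℝ} (hv : 0 ≤ v) :
    gaussPi p v = (stdGaussian (EuclideanSpace ℝ (Fin p))).map (fun z => √v • z) := by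
  have hscale : gaussianReal 0 v.toNNReal = (gaussianReal 0 1).map (√v * ·) := by
    rw [gaussianReal_map_const_mul, mul_zero, mul_one]
    congr
    ext
    simp [Real.sq_sqrt hv, hv]
  rw [gaussPi, hscale, ← Measure.pi_map_pi (fun _ => by fun_prop), ← map_pi_eq_stdGaussian,
    Measure.map_map (by fun_prop) (by fun_prop), Measure.map_map (by fun_prop) (by fun_prop)]
  rfl

instance isProbabilityMeasure_gaussPi (p : ℕ) (v : ℝ) : IsProbabilityMeasure (gaussPi p v) :=
  Measure.isProbabilityMeasure_map (by fun_prop)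

section stdGaussian

variable {E : Type*} [NormedAddCommGroup E] [InnerProductSpace ℝ E] [FiniteDimensional ℝ E]
  [MeasurableSpace E] [BorelSpace E]

lemma memLp_inner_stdGaussian (θ : E) (q : ENNReal) (hq : q ≠ ⊤) :
    MemLp (fun z => ⟪θ, z⟫) q (stdGaussian E) :=
  IsGaussian.memLp_dual _ (innerSL ℝ θ) q hq

lemma integral_inner_stdGaussian (θ : E) : ∫ z, ⟪θ, z⟫ ∂stdGaussian E = 0 :=
  integral_strongDual_stdGaussian (innerSL ℝ θ)

lemma integral_inner_sq_stdGaussian (θ : E) : ∫ z, ⟪θ, z⟫ ^ 2 ∂stdGaussian E = ‖θ‖ ^ 2 := by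
  rw [← variance_of_integral_eq_zero (by fun_prop) (integral_inner_stdGaussian θ),
    ← innerSL_apply_norm ℝ θ, ← variance_dual_stdGaussian]
  rfl

lemma memLp_const_add_mul_inner_stdGaussian (a b : ℝ) (θ : E) :
    MemLp (fun z => a + b * ⟪θ, z⟫) 2 (stdGaussian E) :=
  (memLp_const a).add ((memLp_inner_stdGaussian θ 2 (by simp)).const_mul b)

lemma integral_sq_const_add_mul_inner_stdGaussian (a b : ℝ) (θ : E) :
    ∫ z, (a + b * ⟪θ, z⟫) ^ 2 ∂stdGaussian E = a ^ 2 + b ^ 2 * ‖θ‖ ^ 2 := by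
  have hlin : Integrable (fun z => ⟪θ, z⟫) (stdGaussian E) :=
    memLp_one_iff_integrable.1 (memLp_inner_stdGaussian θ 1 (by simp))
  have hsq : Integrable (fun z => ⟪θ, z⟫ ^ 2) (stdGaussian E) :=
    (memLp_inner_stdGaussian θ 2 (by simp)).integrable_sq
  have hexpand : ∀ z : E,
      (a + b * ⟪θ, z⟫) ^ 2 = a ^ 2 + 2 * a * b * ⟪θ, z⟫ + b ^ 2 * ⟪θ, z⟫ ^ 2 := fun z => by ring
  simp_rw [hexpand]
  have hlow : Integrable (fun z => a ^ 2 + 2 * a * b * ⟪θ, z⟫) (stdGaussian E) :=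
    (integrable_const _).add (hlin.const_mul _)
  rw [integral_add hlow (hsq.const_mul _),
    integral_add (integrable_const _) (hlin.const_mul _), integral_const, integral_const_mul,
    integral_const_mul, integral_inner_stdGaussian, integral_inner_sq_stdGaussian]
  simp

end stdGaussian

lemma quadLoss_add_smul (p : ℕ) (θ x z : EuclideanSpace ℝ (Fin p)) (c y : ℝ) :
    quadLoss p θ (x + c • z) y = 1 / 2 * ((⟪θ, x⟫ * y - 1) + c * y * ⟪θ, z⟫) ^ 2 := by
  rw [quadLoss, inner_add_right, inner_smul_right]
  ring

lemma integrable_quadLoss_add_gaussPi (p : ℕ) {v : ℝ} (hv : 0 ≤ v)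
    (θ x : EuclideanSpace ℝ (Fin p)) (y : ℝ) :
    Integrable (fun w => quadLoss p θ (x + w) y) (gaussPi p v) := by
  rw [gaussPi_eq_map_smul_stdGaussian p hv,
    integrable_map_measure (by unfold quadLoss; fun_prop) (by fun_prop)]
  simp only [Function.comp_def, quadLoss_add_smul]
  exact (memLp_const_add_mul_inner_stdGaussian _ _ θ).integrable_sq.const_mul _

lemma integral_quadLoss_add_gaussPi (p : ℕ) {v : ℝ} (hv : 0 ≤ v)
    (θ x : EuclideanSpace ℝ (Fin p)) (y : ℝ) :
    ∫ w, quadLoss p θ (x + w) y ∂gaussPi p v = quadLoss p θ x y + v * y ^ 2 / 2 * ‖θ‖ ^ 2 := by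
  rw [gaussPi_eq_map_smul_stdGaussian p hv,
    integral_map (by fun_prop) (by unfold quadLoss; fun_prop)]
  simp only [quadLoss_add_smul]
  rw [integral_const_mul, integral_sq_const_add_mul_inner_stdGaussian, quadLoss,
    mul_pow, Real.sq_sqrt hv]
  ring

lemma integral_iwpQuad_add_gaussPi (p : ℕ) (σ ε : ℝ) (θ x : EuclideanSpace ℝ (Fin p)) {y : ℝ}
    (hy : y ^ 2 = 1) :
    ∫ w, iwpQuad p σ ε θ (x + w) y ∂gaussPi p (σ ^ 2)
      = Stilde ε * quadLoss p θ x y + (1 - Stilde ε) * quadLoss p θ x (-y) := by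
  have hint (c y' : ℝ) : Integrable (fun w => c * quadLoss p θ (x + w) y') (gaussPi p (σ ^ 2)) :=
    (integrable_quadLoss_add_gaussPi p (sq_nonneg σ) θ x y').const_mul c
  have hsum : Integrable (fun w => Stilde ε * quadLoss p θ (x + w) y
      + (1 - Stilde ε) * quadLoss p θ (x + w) (-y)) (gaussPi p (σ ^ 2)) :=
    (hint _ y).add (hint _ (-y))
  simp only [iwpQuad]
  rw [integral_sub hsum (integrable_const _), integral_add (hint _ y) (hint _ (-y)),
    integral_const_mul, integral_const_mul, integral_quadLoss_add_gaussPi p (sq_nonneg σ),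
    integral_quadLoss_add_gaussPi p (sq_nonneg σ), neg_sq, hy, integral_const, probReal_univ,
    one_smul]
  ring

/-- `S̃` is chosen so that `[[S̃, 1 - S̃], [1 - S̃, S̃]]` inverts the randomized-response matrix
`[[S, 1 - S], [1 - S, S]]`. -/
lemma S_mul_Stilde_combination {ε : ℝ} (hε : ε ≠ 0) (a b : ℝ) :
    S ε * (Stilde ε * a + (1 - Stilde ε) * b) + (1 - S ε) * (Stilde ε * b + (1 - Stilde ε) * a)
      = a := by
  have hplus : 1 + Real.exp (-ε) ≠ 0 := by positivity
  have hminus : 1 - Real.exp (-ε) ≠ 0 := by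
    rw [sub_ne_zero, ne_comm, Ne, Real.exp_eq_one_iff]
    exact neg_ne_zero.2 hε
  rw [S, Stilde]
  field_simp
  ring

theorem iwp_quad_unbiased_general (p : ℕ) (σ ε : ℝ) (hε : 0 < ε)
    (θ x : EuclideanSpace ℝ (Fin p)) (y : ℝ) (hy : y = 1 ∨ y = -1) :
    S ε * (∫ w, iwpQuad p σ ε θ (x + w) y ∂(gaussPi p (σ ^ 2)))
      + (1 - S ε) * (∫ w, iwpQuad p σ ε θ (x + w) (-y) ∂(gaussPi p (σ ^ 2)))
      = quadLoss p θ x y := by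
  have hy2 : y ^ 2 = 1 := by rcases hy with rfl | rfl <;> norm_num
  rw [integral_iwpQuad_add_gaussPi p σ ε θ x hy2,
    integral_iwpQuad_add_gaussPi p σ ε θ x ((neg_sq y).trans hy2), neg_neg]
  exact S_mul_Stilde_combination hε.ne' _ _

/-- the debiased quadratic-loss estimator is unbiased: taking the
expectation over `x̃ = x + w`, `w ~ N(0, σ²I_p)`, and the independent randomized
response `ỹ` of `y` with keep-probability `S(ε)`, `E[ℓ̃(θ, x̃, ỹ)] = ℓ(θ,x,y)`. -/
theorem iwp_quad_unbiased (p : ℕ) (σ ε : ℝ) (hσ : 0 < σ) (hε : 0 < ε)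
    (θ x : EuclideanSpace ℝ (Fin p)) (y : ℝ) (hy : y = 1 ∨ y = -1) :
    S ε * (∫ w, iwpQuad p σ ε θ (x + w) y ∂(gaussPi p (σ ^ 2)))
      + (1 - S ε) * (∫ w, iwpQuad p σ ε θ (x + w) (-y) ∂(gaussPi p (σ ^ 2)))
      = quadLoss p θ x y :=
  iwp_quad_unbiased_general p σ ε hε θ x y hy
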